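/- Let n ≥ 1 and let U be a nonempty upset of a De Morgan lattice L. Then Cons(fgₙ(U)) is an n-filter on L, and fgₙ(Comp U) is a complete n-filter on L. -/

import Mathlib

/-- A De Morgan lattice: a distributive lattice with an antitone involution. -/
class DeMorgan (L : Type*) extends DistribLattice L where
  dneg : L → L
  dneg_dneg : ∀ x : L, dneg (dneg x) = x
  dneg_sup : ∀ x y : L, dneg (x ⊔ y) = dneg x ⊓ dneg y

prefix:max "∼" => DeMorgan.dneg

section Defs

variable {α : Type*}

/-- An upward closed subset of a lattice. -/
def IsUpset [Lattice α] (F : Set α) : Prop :=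
  ∀ ⦃x y : α⦄, x ∈ F → x ≤ y → y ∈ F

/-- A lattice filter: an upset closed under binary meets. -/
def IsLatFilter [Lattice α] (F : Set α) : Prop :=
  IsUpset F ∧ ∀ x y : α, x ∈ F → y ∈ F → x ⊓ y ∈ F

/-- An `n`-filter: an upset such that for every nonempty finite `Y`, if the meet of
every nonempty subset of `Y` of size at most `n` lies in `F`, then so does the meet of `Y`. -/
def IsNFilter [Lattice α] (n : ℕ) (F : Set α) : Prop :=
  IsUpset F ∧ ∀ (Y : Finset α) (hY : Y.Nonempty),
    (∀ (X : Finset α) (hX : X.Nonempty), X ⊆ Y → X.card ≤ n → X.inf' hX id ∈ F) →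
    Y.inf' hY id ∈ F

/-- A prime upset: `x ⊔ y ∈ F` implies `x ∈ F` or `y ∈ F`. -/
def IsPrimeUpset [Lattice α] (F : Set α) : Prop :=
  ∀ x y : α, x ⊔ y ∈ F → x ∈ F ∨ y ∈ F

/-- A downward closed subset of a lattice. -/
def IsDownset [Lattice α] (I : Set α) : Prop :=
  ∀ ⦃x y : α⦄, x ∈ I → y ≤ x → y ∈ I

/-- A lattice ideal: a downset closed under binary joins. -/
def IsIdeal [Lattice α] (I : Set α) : Prop :=
  IsDownset I ∧ ∀ x y : α, x ∈ I → y ∈ I → x ⊔ y ∈ I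

/-- An `n`-ideal: the order dual notion of an `n`-filter. -/
def IsNIdeal [Lattice α] (n : ℕ) (I : Set α) : Prop :=
  IsDownset I ∧ ∀ (Y : Finset α) (hY : Y.Nonempty),
    (∀ (X : Finset α) (hX : X.Nonempty), X ⊆ Y → X.card ≤ n → X.sup' hX id ∈ I) →
    Y.sup' hY id ∈ I

variable {L : Type*} [DeMorgan L]

/-- Almost complete upset: `x ∈ F` implies `x ⊓ (y ⊔ ∼y) ∈ F`. -/
def AlmostComplete (F : Set L) : Prop := ∀ x ∈ F, ∀ y : L, x ⊓ (y ⊔ ∼y) ∈ F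

/-- Complete upset: almost complete and nonempty. -/
def IsCompleteUpset (F : Set L) : Prop := AlmostComplete F ∧ F.Nonempty

/-- Almost consistent upset: `(x ⊓ ∼x) ⊔ y ∈ F` implies `y ∈ F`. -/
def AlmostConsistent (F : Set L) : Prop := ∀ x y : L, (x ⊓ ∼x) ⊔ y ∈ F → y ∈ F

/-- Consistent upset: almost consistent and not total. -/
def IsConsistentUpset (F : Set L) : Prop := AlmostConsistent F ∧ F ≠ Set.univ

/-- Classical upset: complete and consistent. -/
def IsClassicalUpset (F : Set L) : Prop := IsCompleteUpset F ∧ IsConsistentUpset F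

/-- Kalman upset. -/
def IsKalmanUpset (F : Set L) : Prop :=
  ∀ x y z u : L, ((x ⊓ ∼x) ⊓ z) ⊔ u ∈ F → ((y ⊔ ∼y) ⊓ z) ⊔ u ∈ F

/-- A homomorphism of De Morgan lattices. -/
def IsDMHom {L M : Type*} [DeMorgan L] [DeMorgan M] (h : L → M) : Prop :=
  (∀ x y : L, h (x ⊓ y) = h x ⊓ h y) ∧ (∀ x y : L, h (x ⊔ y) = h x ⊔ h y) ∧
    ∀ x : L, h (∼x) = ∼(h x)

/-- The filter generated by all elements of the form `x ⊔ ∼x`. -/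
def Fcomp (L : Type*) [DeMorgan L] : Set L :=
  {a | ∃ (s : Finset L) (hs : s.Nonempty), s.inf' hs (fun x => x ⊔ ∼x) ≤ a}

/-- The `n`-filter generated by a set. -/
def nFilterGen (n : ℕ) (U : Set L) : Set L :=
  ⋂₀ {F : Set L | IsNFilter n F ∧ U ⊆ F}

/-- `Comp U`. -/
def CompCl (U : Set L) : Set L := {x | ∃ a ∈ U, ∃ f ∈ Fcomp L, a ⊓ f ≤ x}

/-- `Cons U`. -/
def ConsCl (U : Set L) : Set L := {x | ∃ f ∈ Fcomp L, ∼f ⊔ x ∈ U}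

/-- A congruence of De Morgan lattices, as a binary relation. -/
def IsCongruence (θ : L → L → Prop) : Prop :=
  Equivalence θ ∧
  (∀ a b c d : L, θ a b → θ c d → θ (a ⊓ c) (b ⊓ d)) ∧
  (∀ a b c d : L, θ a b → θ c d → θ (a ⊔ c) (b ⊔ d)) ∧
  ∀ a b : L, θ a b → θ (∼a) (∼b)

end Defs

/-- The four-element De Morgan lattice `DM₁` on `Bool × Bool`. -/
instance : DeMorgan (Bool × Bool) :=
  { (inferInstance : DistribLattice (Bool × Bool)) with
    dneg := fun p => (!p.2, !p.1)
    dneg_dneg := by decide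
    dneg_sup := by decide }

/-- Powers of `DM₁`, with componentwise operations. -/
instance {ι : Type*} : DeMorgan (ι → Bool × Bool) :=
  { (inferInstance : DistribLattice (ι → Bool × Bool)) with
    dneg := fun f i => ∼(f i)
    dneg_dneg := fun f => funext fun i => DeMorgan.dneg_dneg (f i)
    dneg_sup := fun f g => funext fun i => DeMorgan.dneg_sup (f i) (g i) }

/-!
`Cons F` is the union, over `f ∈ F_comp`, of the preimages of `F` under the meet homomorphisms
`x ↦ ∼f ⊔ x`; this family is directed because `F_comp` is closed under meets. Preimages of
`n`-filters along meet homomorphisms and directed unions of `n`-filters are `n`-filters, since the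
`n`-filter condition only involves finitely many meets at a time.

For the second claim, `Comp U` is almost complete, so for each `y` the preimage of
`fgₙ (Comp U)` under `x ↦ x ⊓ (y ⊔ ∼y)` is an `n`-filter containing `Comp U`, hence containing
`fgₙ (Comp U)`.
-/

open Finset

section NFilter

variable {α β : Type*} [Lattice α] {n : ℕ}

theorem IsNFilter.preimage [Lattice β] {F : Set β} (hF : IsNFilter n F) (g : InfHom α β) :
    IsNFilter n (g ⁻¹' F) := by
  classical
  refine ⟨fun x y hx hxy => hF.1 hx (OrderHomClass.mono g hxy), fun Y hY hsmall => ?_⟩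
  have hsmall_image : ∀ (X : Finset β) (hX : X.Nonempty), X ⊆ Y.image g → X.card ≤ n →
      X.inf' hX id ∈ F := by
    intro X hX hXY hXc
    obtain ⟨Z, hZY, hinj, rfl⟩ :=
      exists_subset_injOn_image_eq_of_surjOn (Y : Set α) X fun b hb => by simpa using hXY hb
    have hZ : Z.Nonempty := hX.of_image
    have hZc : Z.card ≤ n := card_image_of_injOn hinj ▸ hXc
    simpa [map_finset_inf', inf'_comp_eq_image hZ] using hsmall Z hZ (by simpa using hZY) hZc
  simpa [map_finset_inf', inf'_comp_eq_image hY] using hF.2 _ (hY.image g) hsmall_image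

theorem isNFilter_iUnion_of_directed {ι : Type*} [Nonempty ι] {F : ι → Set α}
    (hdir : Directed (· ⊆ ·) F) (hF : ∀ i, IsNFilter n (F i)) : IsNFilter n (⋃ i, F i) := by
  classical
  refine ⟨fun x y hx hxy => ?_, fun Y hY hsmall => ?_⟩
  · obtain ⟨i, hi⟩ := Set.mem_iUnion.1 hx
    exact Set.mem_iUnion.2 ⟨i, (hF i).1 hi hxy⟩
  · simp only [Set.mem_iUnion] at hsmall
    choose! i hi using hsmall
    obtain ⟨k, hk⟩ := hdir.finset_le (Y.powerset.image i)
    refine Set.mem_iUnion.2 ⟨k, (hF k).2 Y hY fun X hX hXY hXc => ?_⟩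
    exact hk _ (mem_image_of_mem _ (mem_powerset.2 hXY)) (hi X hX hXY hXc)

end NFilter

def InfHom.supLeft {α : Type*} [DistribLattice α] (a : α) : InfHom α α :=
  ⟨(a ⊔ ·), sup_inf_left a⟩

def InfHom.infRight {α : Type*} [SemilatticeInf α] (c : α) : InfHom α α :=
  ⟨(· ⊓ c), fun x y => inf_inf_distrib_right x y c⟩

section NFilterGen

variable {L : Type*} [DeMorgan L] {n : ℕ}

theorem isNFilter_nFilterGen (n : ℕ) (U : Set L) : IsNFilter n (nFilterGen n U) :=
  ⟨fun _ _ hx hxy F hF => hF.1.1 (hx F hF) hxy,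
    fun Y hY hsmall F hF => hF.1.2 Y hY fun X hX hXY hXc => hsmall X hX hXY hXc F hF⟩

theorem subset_nFilterGen (n : ℕ) (U : Set L) : U ⊆ nFilterGen n U :=
  fun _ hx _ hF => hF.2 hx

theorem nFilterGen_subset {U F : Set L} (hF : IsNFilter n F) (hUF : U ⊆ F) :
    nFilterGen n U ⊆ F :=
  fun _ hx => hx F ⟨hF, hUF⟩

end NFilterGen

section DeMorgan

variable {L : Type*} [DeMorgan L]

theorem DeMorgan.dneg_antitone : Antitone (DeMorgan.dneg : L → L) := by
  intro x y hxy
  rw [← sup_eq_right.2 hxy, DeMorgan.dneg_sup]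
  exact inf_le_left

theorem sup_dneg_mem_Fcomp (x : L) : x ⊔ ∼x ∈ Fcomp L :=
  ⟨{x}, singleton_nonempty x, by simp⟩

theorem inf_mem_Fcomp {f g : L} (hf : f ∈ Fcomp L) (hg : g ∈ Fcomp L) : f ⊓ g ∈ Fcomp L := by
  classical
  obtain ⟨s, hs, hsf⟩ := hf
  obtain ⟨t, ht, htg⟩ := hg
  exact ⟨s ∪ t, hs.mono subset_union_left, (inf'_union hs ht _).trans_le (inf_le_inf hsf htg)⟩

theorem consCl_eq_iUnion (F : Set L) :
    ConsCl F = ⋃ f : Fcomp L, InfHom.supLeft (∼(f : L)) ⁻¹' F := by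
  ext x
  simp [ConsCl, InfHom.supLeft]

theorem IsNFilter.consCl [Nonempty L] {n : ℕ} {F : Set L} (hF : IsNFilter n F) :
    IsNFilter n (ConsCl F) := by
  obtain ⟨x⟩ := ‹Nonempty L›
  have : Nonempty (Fcomp L) := ⟨⟨x ⊔ ∼x, sup_dneg_mem_Fcomp x⟩⟩
  rw [consCl_eq_iUnion]
  refine isNFilter_iUnion_of_directed ?_ fun f => hF.preimage _
  rintro ⟨f, hf⟩ ⟨g, hg⟩
  have hanti : ∀ {f'}, f ⊓ g ≤ f' →
      InfHom.supLeft (∼f') ⁻¹' F ⊆ InfHom.supLeft (∼(f ⊓ g)) ⁻¹' F :=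
    fun hle y hy => hF.1 hy (sup_le_sup_right (DeMorgan.dneg_antitone hle) y)
  exact ⟨⟨f ⊓ g, inf_mem_Fcomp hf hg⟩, hanti inf_le_left, hanti inf_le_right⟩

theorem subset_compCl (U : Set L) : U ⊆ CompCl U :=
  fun a ha => ⟨a, ha, a ⊔ ∼a, sup_dneg_mem_Fcomp a, inf_le_left⟩

theorem almostComplete_compCl (U : Set L) : AlmostComplete (CompCl U) := by
  rintro x ⟨a, ha, f, hf, hafx⟩ y
  refine ⟨a, ha, f ⊓ (y ⊔ ∼y), inf_mem_Fcomp hf (sup_dneg_mem_Fcomp y), ?_⟩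
  rw [← inf_assoc]
  exact inf_le_inf_right _ hafx

theorem AlmostComplete.nFilterGen {n : ℕ} {U : Set L} (hU : AlmostComplete U) :
    AlmostComplete (nFilterGen n U) := fun _ hx y =>
  nFilterGen_subset ((isNFilter_nFilterGen n U).preimage (InfHom.infRight (y ⊔ ∼y)))
    (fun z hz => subset_nFilterGen n U (hU z hz y)) hx

end DeMorgan

theorem statement14 {L : Type*} [DeMorgan L] [Nonempty L] (n : ℕ)
    (U : Set L) (hne : U.Nonempty) :
    IsNFilter n (ConsCl (nFilterGen n U)) ∧
    (IsNFilter n (nFilterGen n (CompCl U)) ∧ IsCompleteUpset (nFilterGen n (CompCl U))) :=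
  ⟨(isNFilter_nFilterGen n U).consCl, isNFilter_nFilterGen n (CompCl U),
    (almostComplete_compCl U).nFilterGen,
    hne.mono ((subset_compCl U).trans (subset_nFilterGen n (CompCl U)))⟩
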